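/- For every n ≥ 1, S_n↑ := {x↑ : x ∈ S_n} equals {0,1}ⁿ \ {0}; in particular |S_n↑| = 2ⁿ − 1. -/

import Mathlib

/-- `x` is an integer point. -/
def isInt {n : ℕ} (x : Fin n → ℝ) : Prop := ∀ i, ∃ z : ℤ, x i = (z : ℝ)

/-- `w = x↑` for `x ∈ K = ℝⁿ₊`: if `x ∈ ℤⁿ` then `w = x`; otherwise, with `k` the
smallest index such that `x_k ∉ ℤ`, `wᵢ = xᵢ` for `i < k`, `w_k = ⌈x_k⌉`, and `wᵢ = 0`
for `i > k`. -/
def stdUp {n : ℕ} (x w : Fin n → ℝ) : Prop :=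
  (isInt x ∧ w = x) ∨
  ∃ k : Fin n, (¬ ∃ z : ℤ, x k = (z : ℝ)) ∧
    (∀ j : Fin n, j < k → ∃ z : ℤ, x j = (z : ℝ)) ∧
    (∀ i : Fin n, i < k → w i = x i) ∧ w k = (⌈x k⌉ : ℝ) ∧
    (∀ i : Fin n, k < i → w i = 0)

/-- `S_n = {x ∈ [0,1]ⁿ : ‖x - 𝟙/2‖² ≤ n/4 - 3/16}`. -/
def Sn (n : ℕ) : Set (Fin n → ℝ) :=
  {x | (∀ i, x i ∈ Set.Icc (0 : ℝ) 1) ∧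
    ∑ i, (x i - 1/2) ^ 2 ≤ (n : ℝ)/4 - 3/16}

/-- `S_n↑ = {x↑ : x ∈ S_n}`. -/
def SnUp (n : ℕ) : Set (Fin n → ℝ) := {w | ∃ x ∈ Sn n, stdUp x w}

/-!
On the vertices of `[0,1]ⁿ` every term of `∑ (xᵢ - 1/2)²` is `1/4`, so the sum is
`n/4 > n/4 - 3/16`: `S_n` contains no integer point, and `x↑` always comes from a first
non-integer coordinate `x_k ∈ (0,1)`, giving `x↑ ∈ {0,1}ⁿ` with `x↑_k = 1`. Conversely a
nonzero `w ∈ {0,1}ⁿ` whose last `1` sits at index `k` is `x↑` for `x = w` with `x_k` replaced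
by `1/2`, and `‖x - 𝟙/2‖² = (n - 1)/4` puts `x` in `S_n`.
-/

open Finset Function

lemma eq_zero_or_eq_one_of_mem_Icc_of_intCast {y : ℝ} (hy : y ∈ Set.Icc (0 : ℝ) 1)
    (hz : ∃ z : ℤ, y = z) : y = 0 ∨ y = 1 := by
  obtain ⟨z, rfl⟩ := hz
  have hz0 : 0 ≤ z := by exact_mod_cast hy.1
  have hz1 : z ≤ 1 := by exact_mod_cast hy.2
  interval_cases z <;> simp

lemma half_ne_intCast (z : ℤ) : (1 / 2 : ℝ) ≠ z := by
  intro h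
  have : ((2 * z : ℤ) : ℝ) = 1 := by push_cast; linarith
  have : 2 * z = 1 := by exact_mod_cast this
  omega

lemma ceil_eq_one_of_mem_Icc_of_ne_intCast {y : ℝ} (hy : y ∈ Set.Icc (0 : ℝ) 1)
    (hy' : ¬ ∃ z : ℤ, y = z) : ⌈y⌉ = 1 := by
  have hpos : 0 < y := hy.1.lt_of_ne fun h => hy' ⟨0, by simp [← h]⟩
  rw [Int.ceil_eq_iff]
  constructor <;> push_cast <;> linarith [hy.2]

lemma sq_sub_half_of_eq_zero_or_eq_one {y : ℝ} (hy : y = 0 ∨ y = 1) :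
    (y - 1 / 2) ^ 2 = 1 / 4 := by
  rcases hy with rfl | rfl <;> norm_num

lemma sum_sq_sub_half_of_binary {ι : Type*} [Fintype ι] {w : ι → ℝ}
    (hw : ∀ i, w i = 0 ∨ w i = 1) : ∑ i, (w i - 1 / 2) ^ 2 = (Fintype.card ι : ℝ) / 4 := by
  simp only [fun i => sq_sub_half_of_eq_zero_or_eq_one (hw i), sum_const, card_univ,
    nsmul_eq_mul]
  ring

lemma ncard_binary_ne_zero {ι : Type*} [Fintype ι] :
    {w : ι → ℝ | (∀ i, w i = 0 ∨ w i = 1) ∧ w ≠ 0}.ncard =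
      2 ^ Fintype.card ι - 1 := by
  classical
  have hcube : {w : ι → ℝ | ∀ i, w i = 0 ∨ w i = 1} =
      ↑(Fintype.piFinset fun _ : ι => ({0, 1} : Finset ℝ)) := by
    ext w
    simp
  have hdiff : {w : ι → ℝ | (∀ i, w i = 0 ∨ w i = 1) ∧ w ≠ 0} =
      {w : ι → ℝ | ∀ i, w i = 0 ∨ w i = 1} \ {0} := rfl
  rw [hdiff, Set.ncard_sdiff_singleton_of_mem (by simp), hcube,
    Set.ncard_coe_finset, Fintype.card_piFinset]
  simp

lemma not_isInt_of_mem_Sn {n : ℕ} {x : Fin n → ℝ} (hx : x ∈ Sn n) : ¬ isInt x := by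
  intro hint
  have hsum := sum_sq_sub_half_of_binary fun i =>
    eq_zero_or_eq_one_of_mem_Icc_of_intCast (hx.1 i) (hint i)
  have := hx.2
  rw [hsum, Fintype.card_fin] at this
  linarith

lemma binary_ne_zero_of_stdUp {n : ℕ} {x w : Fin n → ℝ} (hx : x ∈ Sn n) (hw : stdUp x w) :
    (∀ i, w i = 0 ∨ w i = 1) ∧ w ≠ 0 := by
  rcases hw with ⟨hint, -⟩ | ⟨k, hk, hint, hlt, hwk, hgt⟩
  · exact absurd hint (not_isInt_of_mem_Sn hx)
  have hwk1 : w k = 1 := by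
    rw [hwk, ceil_eq_one_of_mem_Icc_of_ne_intCast (hx.1 k) hk, Int.cast_one]
  refine ⟨fun i => ?_, fun h0 => by simp [h0] at hwk1⟩
  rcases lt_trichotomy i k with h | rfl | h
  · rw [hlt i h]
    exact eq_zero_or_eq_one_of_mem_Icc_of_intCast (hx.1 i) (hint i h)
  · exact Or.inr hwk1
  · exact Or.inl (hgt i h)

lemma update_half_mem_Sn {n : ℕ} {w : Fin n → ℝ} (hw : ∀ i, w i = 0 ∨ w i = 1)
    (k : Fin n) : update w k (1 / 2) ∈ Sn n := by
  refine ⟨fun i => ?_, ?_⟩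
  · rcases eq_or_ne i k with rfl | h
    · norm_num
    · rcases hw i with hi | hi <;> simp [h, hi]
  · have hsum := sum_sq_sub_half_of_binary hw
    rw [Fintype.card_fin] at hsum
    calc ∑ i, (update w k (1 / 2) i - 1 / 2) ^ 2
        = ∑ i, update (fun i => (w i - 1 / 2) ^ 2) k 0 i := by
          refine sum_congr rfl fun i _ => ?_
          rcases eq_or_ne i k with rfl | h
          · norm_num
          · simp [h]
      _ = ∑ i, (w i - 1 / 2) ^ 2 - (w k - 1 / 2) ^ 2 := by
          rw [sum_update_of_mem (mem_univ k), zero_add, ← sum_erase_eq_sub (mem_univ k),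
            sdiff_singleton_eq_erase]
      _ ≤ n / 4 - 3 / 16 := by
          rw [hsum, sq_sub_half_of_eq_zero_or_eq_one (hw k)]
          linarith

lemma stdUp_update_half {n : ℕ} {w : Fin n → ℝ} (hw : ∀ i, w i = 0 ∨ w i = 1) {k : Fin n}
    (hwk : w k = 1) (hgt : ∀ i, k < i → w i = 0) : stdUp (update w k (1 / 2)) w := by
  refine Or.inr ⟨k, ?_, fun j hj => ?_, fun i hi => ?_, ?_, hgt⟩
  · simpa using fun z => half_ne_intCast z
  · rw [update_of_ne hj.ne]
    rcases hw j with h | h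
    · exact ⟨0, by simp [h]⟩
    · exact ⟨1, by simp [h]⟩
  · rw [update_of_ne hi.ne]
  · rw [update_self, hwk, (Int.ceil_eq_iff (z := 1)).2 (by norm_num), Int.cast_one]

lemma mem_SnUp_of_binary_ne_zero {n : ℕ} {w : Fin n → ℝ} (hw : ∀ i, w i = 0 ∨ w i = 1)
    (hne : w ≠ 0) : w ∈ SnUp n := by
  classical
  have hones : (univ.filter fun i => w i = 1).Nonempty := by
    by_contra h
    exact hne (funext fun i => (hw i).resolve_right fun hi => h ⟨i, by simp [hi]⟩)
  set k := (univ.filter fun i => w i = 1).max' hones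
  have hwk : w k = 1 := by simpa using max'_mem _ hones
  have hgt : ∀ i, k < i → w i = 0 := fun i hi =>
    (hw i).resolve_right fun h => hi.not_ge (le_max' _ i (by simp [h]))
  exact ⟨_, update_half_mem_Sn hw k, stdUp_update_half hw hwk hgt⟩

theorem stmt18_general (n : ℕ) :
    SnUp n = {w : Fin n → ℝ | (∀ i, w i = 0 ∨ w i = 1) ∧ w ≠ 0} ∧
    (SnUp n).ncard = 2 ^ n - 1 := by
  have hset : SnUp n = {w : Fin n → ℝ | (∀ i, w i = 0 ∨ w i = 1) ∧ w ≠ 0} :=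
    Set.ext fun w => ⟨fun ⟨_, hx, hup⟩ => binary_ne_zero_of_stdUp hx hup,
      fun ⟨hw, hne⟩ => mem_SnUp_of_binary_ne_zero hw hne⟩
  refine ⟨hset, ?_⟩
  rw [hset, ncard_binary_ne_zero, Fintype.card_fin]

/-- For every `n ≥ 1`, `S_n↑ = {0,1}ⁿ \ {0}`; in particular `|S_n↑| = 2ⁿ - 1`. -/
theorem stmt18 (n : ℕ) (hn : 1 ≤ n) :
    SnUp n = {w : Fin n → ℝ | (∀ i, w i = 0 ∨ w i = 1) ∧ w ≠ 0} ∧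
    (SnUp n).ncard = 2 ^ n - 1 :=
  stmt18_general n
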